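/- Let p_1, ..., p_n ∈ ℝ^d, u ∈ D^n a distribution, E_u = Σ_i u_i p_i, x = Σ_j u_j ‖p_j − E_u‖ > 0, v = Σ_j u_j ‖(p_j − E_u, x)‖, q_i = (p_i − E_u, x)/‖(p_i − E_u, x)‖, and s_i = u_i ‖(p_i − E_u, x)‖ / v. Let N ≥ 16 be a real number and let w' ∈ D^n be a distribution satisfying ‖Σ_i (s_i − w'_i) q_i‖² ≤ 1/N. Define w''_i = v·w'_i / ‖(p_i − E_u, x)‖ and w_i = w''_i / Σ_j w''_j (which is well defined since Σ_j w''_j > 0), and set τ = v/(√N·x). Then ‖Σ_i u_i p_i − Σ_i w_i p_i‖² ≤ (2v²/N)·(1 + 2(1 + τ²)/(1 − τ)²). -/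

import Mathlib

set_option maxHeartbeats 1000000


open Finset

/-- `append a t` is the vector in `ℝ^{d+1}` obtained from `a ∈ ℝ^d` by appending the
coordinate `t`. -/
noncomputable def append {d : ℕ} (a : EuclideanSpace ℝ (Fin d)) (t : ℝ) :
    EuclideanSpace ℝ (Fin (d + 1)) :=
  (WithLp.equiv 2 (Fin (d + 1) → ℝ)).symm (Fin.snoc ((WithLp.equiv 2 (Fin d → ℝ)) a) t)

lemma append_castSucc {d : ℕ} (a : EuclideanSpace ℝ (Fin d)) (t : ℝ) (k : Fin d) :
    append a t k.castSucc = a k := by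
  simp [append]

lemma append_last {d : ℕ} (a : EuclideanSpace ℝ (Fin d)) (t : ℝ) :
    append a t (Fin.last d) = t := by
  simp [append]

lemma norm_sq_eq {m : ℕ} (y : EuclideanSpace ℝ (Fin m)) : ‖y‖ ^ 2 = ∑ j, (y j) ^ 2 := by
  rw [EuclideanSpace.norm_eq, Real.sq_sqrt (by positivity)]
  simp [sq_abs]

lemma sum_smul_apply {m n : ℕ} (c : Fin n → ℝ) (y : Fin n → EuclideanSpace ℝ (Fin m))
    (j : Fin m) : (∑ i, c i • y i) j = ∑ i, c i * y i j := by
  calc (∑ i, c i • y i) j = EuclideanSpace.projₗ (𝕜 := ℝ) j (∑ i, c i • y i) := rfl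
    _ = ∑ i, c i * y i j := by rw [map_sum]; simp [smul_eq_mul]

lemma coord_sq_le_norm_sq {m : ℕ} (y : EuclideanSpace ℝ (Fin m)) (j : Fin m) :
    (y j) ^ 2 ≤ ‖y‖ ^ 2 := by
  rw [norm_sq_eq]
  exact Finset.single_le_sum (f := fun j => (y j) ^ 2) (fun _ _ => sq_nonneg _)
    (Finset.mem_univ j)

lemma norm_append_sq {d : ℕ} (a : EuclideanSpace ℝ (Fin d)) (t : ℝ) :
    ‖append a t‖ ^ 2 = ‖a‖ ^ 2 + t ^ 2 := by
  rw [norm_sq_eq, norm_sq_eq, Fin.sum_univ_castSucc]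
  simp [append_castSucc, append_last]

/-- In the normalized setting, with `N ≥ 16`, a distribution `w'` satisfying
`‖∑ (sᵢ − w'ᵢ) qᵢ‖² ≤ 1/N`, `w''ᵢ = v·w'ᵢ/‖(pᵢ − E_u, x)‖`, `wᵢ = w''ᵢ/∑ⱼ w''ⱼ`
and `τ = v/(√N·x)`, one has
`‖∑ uᵢ pᵢ − ∑ wᵢ pᵢ‖² ≤ (2v²/N)·(1 + 2(1 + τ²)/(1 − τ)²)`. -/
theorem error_bound_in_terms_of_v_and_tau
    {n d : ℕ} (p : Fin n → EuclideanSpace ℝ (Fin d)) (u : Fin n → ℝ)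
    (hu0 : ∀ i, 0 ≤ u i) (hu1 : ∑ i, u i = 1)
    (Eu : EuclideanSpace ℝ (Fin d)) (hEu : Eu = ∑ i, u i • p i)
    (x : ℝ) (hx : x = ∑ j, u j * ‖p j - Eu‖) (hxpos : 0 < x)
    (v : ℝ) (hv : v = ∑ j, u j * ‖append (p j - Eu) x‖)
    (q : Fin n → EuclideanSpace ℝ (Fin (d + 1)))
    (hq : ∀ i, q i = ‖append (p i - Eu) x‖⁻¹ • append (p i - Eu) x)
    (s : Fin n → ℝ) (hs : ∀ i, s i = u i * ‖append (p i - Eu) x‖ / v)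
    (N : ℝ) (hN : 16 ≤ N)
    (w' : Fin n → ℝ) (hw'0 : ∀ i, 0 ≤ w' i) (hw'1 : ∑ i, w' i = 1)
    (happrox : ‖∑ i, (s i - w' i) • q i‖ ^ 2 ≤ 1 / N)
    (w'' : Fin n → ℝ) (hw'' : ∀ i, w'' i = v * w' i / ‖append (p i - Eu) x‖)
    (hw''pos : 0 < ∑ j, w'' j)
    (w : Fin n → ℝ) (hw : ∀ i, w i = w'' i / ∑ j, w'' j)
    (τ : ℝ) (hτ : τ = v / (Real.sqrt N * x)) :
    ‖(∑ i, u i • p i) - ∑ i, w i • p i‖ ^ 2 ≤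
      2 * v ^ 2 / N * (1 + 2 * (1 + τ ^ 2) / (1 - τ) ^ 2) := by
  classical
  have hNpos : (0 : ℝ) < N := by linarith
  set a : Fin n → EuclideanSpace ℝ (Fin (d + 1)) := fun i => append (p i - Eu) x with hadef
  have hai : ∀ i, append (p i - Eu) x = a i := fun _ => rfl
  simp only [hai] at hq hs hv hw'' happrox
  set S : ℝ := ∑ j, w'' j with hSdef
  set δ : EuclideanSpace ℝ (Fin (d + 1)) := ∑ i, (s i - w' i) • q i with hδdef
  have ha_last : ∀ i, a i (Fin.last d) = x := fun i => append_last _ _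
  have ha_cast : ∀ i k, a i (Fin.castSucc k) = p i k - Eu k := fun i k =>
    append_castSucc (p i - Eu) x k
  -- x ≤ ‖a i‖, so norms are positive
  have hx_le : ∀ i, x ≤ ‖a i‖ := by
    intro i
    have h1 := coord_sq_le_norm_sq (a i) (Fin.last d)
    rw [ha_last i] at h1
    nlinarith [norm_nonneg (a i)]
  have hna : ∀ i, 0 < ‖a i‖ := fun i => lt_of_lt_of_le hxpos (hx_le i)
  -- x ≤ v
  have hvx : x ≤ v := by
    rw [hv]
    calc x = ∑ j, u j * x := by rw [← Finset.sum_mul, hu1, one_mul]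
      _ ≤ ∑ j, u j * ‖a j‖ :=
        Finset.sum_le_sum fun j _ => mul_le_mul_of_nonneg_left (hx_le j) (hu0 j)
  have hvpos : 0 < v := lt_of_lt_of_le hxpos hvx
  -- v ≤ 2x
  have hv2x : v ≤ 2 * x := by
    have hle : ∀ j, ‖a j‖ ≤ ‖p j - Eu‖ + x := by
      intro j
      have h2 : ‖a j‖ ^ 2 = ‖p j - Eu‖ ^ 2 + x ^ 2 := norm_append_sq _ _
      nlinarith [norm_nonneg (a j), norm_nonneg (p j - Eu)]
    rw [hv]
    calc ∑ j, u j * ‖a j‖ ≤ ∑ j, u j * (‖p j - Eu‖ + x) :=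
          Finset.sum_le_sum fun j _ => mul_le_mul_of_nonneg_left (hle j) (hu0 j)
      _ = (∑ j, u j * ‖p j - Eu‖) + ∑ j, u j * x := by
          rw [← Finset.sum_add_distrib]; exact Finset.sum_congr rfl fun j _ => mul_add _ _ _
      _ = x + x := by rw [← hx, ← Finset.sum_mul, hu1, one_mul]
      _ = 2 * x := by ring
  -- coordinates of δ
  have hδc : ∀ j, δ j = v⁻¹ * ((∑ i, u i * a i j) - ∑ i, w'' i * a i j) := by
    intro j
    rw [hδdef, sum_smul_apply]
    have hterm : ∀ i, (s i - w' i) * q i j = v⁻¹ * (u i * a i j - w'' i * a i j) := by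
      intro i
      rw [hq i, hs i, hw'' i]
      have h1 : (‖a i‖⁻¹ • a i) j = ‖a i‖⁻¹ * a i j := rfl
      rw [h1]
      field_simp [(hna i).ne', hvpos.ne']
    rw [Finset.sum_congr rfl fun i _ => hterm i, ← Finset.mul_sum, Finset.sum_sub_distrib]
  have hEu_c : ∀ k, Eu k = ∑ i, u i * p i k := by
    intro k; rw [hEu, sum_smul_apply]
  have hA0 : ∀ k, ∑ i, u i * a i (Fin.castSucc k) = 0 := by
    intro k
    simp only [ha_cast]
    have : ∀ i, u i * (p i k - Eu k) = u i * p i k - u i * Eu k := fun i => mul_sub _ _ _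
    rw [Finset.sum_congr rfl fun i _ => this i, Finset.sum_sub_distrib, ← Finset.sum_mul, hu1,
      ← hEu_c k]
    ring
  have hAlast : ∑ i, u i * a i (Fin.last d) = x := by
    simp only [ha_last]; rw [← Finset.sum_mul, hu1, one_mul]
  have hTlast : ∑ i, w'' i * a i (Fin.last d) = S * x := by
    simp only [ha_last]; rw [← Finset.sum_mul]
  have hδlast : δ (Fin.last d) = v⁻¹ * (x - S * x) := by
    rw [hδc, hAlast, hTlast]
  have hδcast : ∀ k, δ (Fin.castSucc k) =
      v⁻¹ * (0 - ∑ i, w'' i * (p i k - Eu k)) := by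
    intro k
    rw [hδc, hA0]
    simp only [ha_cast]
  -- norm bounds on δ
  have hδsq : ∑ j, (δ j) ^ 2 ≤ 1 / N := by rw [← norm_sq_eq]; exact happrox
  have hsplit : ∑ j, (δ j) ^ 2 =
      (∑ k : Fin d, (δ (Fin.castSucc k)) ^ 2) + (δ (Fin.last d)) ^ 2 :=
    Fin.sum_univ_castSucc _
  have hQnonneg : 0 ≤ ∑ k : Fin d, (δ (Fin.castSucc k)) ^ 2 :=
    Finset.sum_nonneg fun k _ => sq_nonneg _
  have hQ : ∑ k : Fin d, (δ (Fin.castSucc k)) ^ 2 ≤ 1 / N := by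
    nlinarith [sq_nonneg (δ (Fin.last d))]
  have hδl2 : (δ (Fin.last d)) ^ 2 ≤ 1 / N := by linarith
  -- τ facts
  have hsqrtN : 4 ≤ Real.sqrt N := by
    have : Real.sqrt 16 ≤ Real.sqrt N := Real.sqrt_le_sqrt hN
    rwa [show (16 : ℝ) = 4 ^ 2 by norm_num, Real.sqrt_sq (by norm_num)] at this
  have hτ0 : 0 ≤ τ := by
    rw [hτ]
    exact div_nonneg hvpos.le (mul_nonneg (Real.sqrt_nonneg N) hxpos.le)
  have hτhalf : τ ≤ 1 / 2 := by
    have hsx : (0 : ℝ) < Real.sqrt N * x :=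
      mul_pos (lt_of_lt_of_le (by norm_num) hsqrtN) hxpos
    rw [hτ, div_le_iff₀ hsx]
    nlinarith
  have hτ2 : τ ^ 2 * (N * x ^ 2) = v ^ 2 := by
    rw [hτ, div_pow, mul_pow, Real.sq_sqrt hNpos.le]
    field_simp
  -- bound on S
  have h1S : (1 - S) ^ 2 ≤ τ ^ 2 := by
    have h : x * (1 - S) = v * δ (Fin.last d) := by
      rw [hδlast]
      field_simp
    have h2 : (x * (1 - S)) ^ 2 = (v * δ (Fin.last d)) ^ 2 := by rw [h]
    have hNδ : δ (Fin.last d) ^ 2 * N ≤ 1 := (le_div_iff₀ hNpos).mp hδl2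
    have h3 : v ^ 2 * δ (Fin.last d) ^ 2 = τ ^ 2 * N * x ^ 2 * δ (Fin.last d) ^ 2 := by
      rw [← hτ2]; ring
    have key : 0 ≤ τ ^ 2 * x ^ 2 * (1 - δ (Fin.last d) ^ 2 * N) :=
      mul_nonneg (mul_nonneg (sq_nonneg τ) (sq_nonneg x)) (by linarith)
    nlinarith [h2, h3, key, mul_pos hxpos hxpos]
  have hSge : 1 - τ ≤ S := by nlinarith
  have h1τpos : (0 : ℝ) < 1 - τ := by linarith
  have hSpos : (0 : ℝ) < S := by linarith
  -- coordinates of the error vector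
  have he : ∀ k, (∑ i, u i * p i k) - (∑ i, w i * p i k) = (v / S) * δ (Fin.castSucc k) := by
    intro k
    rw [hδcast k]
    have hsum1 : ∑ i, w i * p i k = (∑ i, w'' i * p i k) / S := by
      rw [Finset.sum_div]
      exact Finset.sum_congr rfl fun i _ => by rw [hw i]; ring
    have hsum2 : ∑ i, w'' i * (p i k - Eu k) = (∑ i, w'' i * p i k) - S * Eu k := by
      have : ∀ i, w'' i * (p i k - Eu k) = w'' i * p i k - w'' i * Eu k := fun i =>
        mul_sub _ _ _
      rw [Finset.sum_congr rfl fun i _ => this i, Finset.sum_sub_distrib, ← Finset.sum_mul]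
    rw [hsum1, hsum2, ← hEu_c k]
    field_simp
    ring
  -- compute the norm of the error
  have hLHS : ‖(∑ i, u i • p i) - ∑ i, w i • p i‖ ^ 2 =
      (v / S) ^ 2 * ∑ k : Fin d, (δ (Fin.castSucc k)) ^ 2 := by
    rw [norm_sq_eq]
    have hco : ∀ k, ((∑ i, u i • p i) - ∑ i, w i • p i) k = (v / S) * δ (Fin.castSucc k) := by
      intro k
      have h0 : ((∑ i, u i • p i) - ∑ i, w i • p i) k =
          (∑ i, u i • p i) k - (∑ i, w i • p i) k := rfl
      rw [h0, sum_smul_apply, sum_smul_apply]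
      exact he k
    rw [Finset.sum_congr rfl fun k _ => by rw [hco k]]
    rw [Finset.mul_sum]
    exact Finset.sum_congr rfl fun k _ => by ring
  -- final chain of inequalities
  have hstep1 : (v / S) ^ 2 ≤ (v / (1 - τ)) ^ 2 := by
    have h1 : v / S ≤ v / (1 - τ) := div_le_div_of_nonneg_left hvpos.le h1τpos hSge
    have h2 : 0 ≤ v / S := div_nonneg hvpos.le hSpos.le
    nlinarith
  have hstep2 : (v / (1 - τ)) ^ 2 * (1 / N) ≤
      2 * v ^ 2 / N * (1 + 2 * (1 + τ ^ 2) / (1 - τ) ^ 2) := by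
    have hD : (0 : ℝ) < (1 - τ) ^ 2 := pow_pos h1τpos 2
    have heq : 2 * v ^ 2 / N * (1 + 2 * (1 + τ ^ 2) / (1 - τ) ^ 2) -
        (v / (1 - τ)) ^ 2 * (1 / N) = (v ^ 2 / N) * (2 + (3 + 4 * τ ^ 2) / (1 - τ) ^ 2) := by
      field_simp
      ring
    have hpos : 0 ≤ (v ^ 2 / N) * (2 + (3 + 4 * τ ^ 2) / (1 - τ) ^ 2) := by positivity
    linarith
  calc ‖(∑ i, u i • p i) - ∑ i, w i • p i‖ ^ 2
      = (v / S) ^ 2 * ∑ k : Fin d, (δ (Fin.castSucc k)) ^ 2 := hLHS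
    _ ≤ (v / (1 - τ)) ^ 2 * (1 / N) :=
        mul_le_mul hstep1 hQ hQnonneg (sq_nonneg _)
    _ ≤ 2 * v ^ 2 / N * (1 + 2 * (1 + τ ^ 2) / (1 - τ) ^ 2) := hstep2
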